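/- arXiv:1305.6856 — 12 statements merged into one kernel-verified Lean document; each statement's English description precedes it below -/
import Mathlib

section
/- Every AG**-groupoid satisfies the paramedial law: (wx)(yz) = (zx)(yw) for all elements w, x, y, z. -/
/-- Every AG**-groupoid (a magma satisfying `(x*y)*z = (z*y)*x` and `x*(y*z) = y*(x*z)`)
satisfies the paramedial law `(w*x)*(y*z) = (z*x)*(y*w)`. -/
theorem paramedial_law {A : Type*} [Mul A]
    (hAG : ∀ x y z : A, x * y * z = z * y * x)
    (hStar : ∀ x y z : A, x * (y * z) = y * (x * z))
    (w x y z : A) :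
    (w * x) * (y * z) = (z * x) * (y * w) :=
  calc (w * x) * (y * z) = y * (w * x * z) := hStar _ _ _
    _ = y * (z * x * w) := by rw [hAG]
    _ = (z * x) * (y * w) := hStar _ _ _
end

section
/- In an AG**-groupoid A, for every idempotent e and all elements a, b, one has e(ab) = (ea)b. -/
theorem mul_mul_mul_eq_mul_mul_mul_swap_of_leftInvertive {A : Type*} [Mul A]
    (hAG : ∀ x y z : A, x * y * z = z * y * x)
    (hStar : ∀ x y z : A, x * (y * z) = y * (x * z)) (x y a b : A) :
    x * y * (a * b) = y * x * a * b :=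
  calc x * y * (a * b) = a * (x * y * b) := hStar _ _ _
    _ = a * (b * y * x) := by rw [hAG x y b]
    _ = b * y * (a * x) := hStar _ _ _
    _ = a * x * y * b := hAG _ _ _
    _ = y * x * a * b := by rw [hAG a x y]

/-- In an AG**-groupoid, for every idempotent `e` and all elements `a, b`,
one has `e*(a*b) = (e*a)*b`. -/
theorem idem_assoc {A : Type*} [Mul A]
    (hAG : ∀ x y z : A, x * y * z = z * y * x)
    (hStar : ∀ x y z : A, x * (y * z) = y * (x * z))
    (e : A) (he : e * e = e) (a b : A) :
    e * (a * b) = (e * a) * b := by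
  simpa only [he] using mul_mul_mul_eq_mul_mul_mul_swap_of_leftInvertive hAG hStar e e a b
end

section
/- In an AG**-groupoid, the set of idempotents is closed under multiplication and any two idempotents commute; hence the set of idempotents, if nonempty, forms a semilattice. -/
/-!
An AG**-groupoid is medial, `(ab)(cd) = (ac)(bd)`, and paramedial, `(ab)(cd) = (db)(ca)`.
Mediality gives `(ef)(ef) = (ee)(ff) = ef` for idempotents `e, f`, and then paramediality gives
`ef = (ef)(ef) = (ff)(ee) = fe`.
-/

section Magma

variable {A : Type*} [Mul A]

theorem medial_of_leftInvertive (hAG : ∀ x y z : A, x * y * z = z * y * x) (a b c d : A) :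
    a * b * (c * d) = a * c * (b * d) :=
  calc a * b * (c * d) = c * d * b * a := hAG _ _ _
    _ = b * d * c * a := by rw [hAG c d b]
    _ = a * c * (b * d) := hAG _ _ _

theorem paramedial_of_leftInvertive_of_leftPermutable
    (hAG : ∀ x y z : A, x * y * z = z * y * x) (hStar : ∀ x y z : A, x * (y * z) = y * (x * z))
    (a b c d : A) : a * b * (c * d) = d * b * (c * a) :=
  calc a * b * (c * d) = c * (a * b * d) := hStar _ _ _
    _ = c * (d * b * a) := by rw [hAG a b d]
    _ = d * b * (c * a) := hStar _ _ _

theorem IsIdempotentElem.mul_of_medial (hmed : ∀ a b c d : A, a * b * (c * d) = a * c * (b * d))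
    {e f : A} (he : IsIdempotentElem e) (hf : IsIdempotentElem f) : IsIdempotentElem (e * f) := by
  rw [IsIdempotentElem, hmed, he.eq, hf.eq]

theorem IsIdempotentElem.mul_comm_of_paramedial
    (hpara : ∀ a b c d : A, a * b * (c * d) = d * b * (c * a))
    {e f : A} (he : IsIdempotentElem e) (hf : IsIdempotentElem f) (hef : IsIdempotentElem (e * f)) :
    e * f = f * e :=
  calc e * f = e * f * (e * f) := hef.eq.symm
    _ = f * f * (e * e) := hpara _ _ _ _
    _ = f * e := by rw [he.eq, hf.eq]

end Magma

/-- In an AG**-groupoid, the set of idempotents is closed under multiplication and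
any two idempotents commute; hence the idempotents form a semilattice. -/
theorem idempotents_semilattice {A : Type*} [Mul A]
    (hAG : ∀ x y z : A, x * y * z = z * y * x)
    (hStar : ∀ x y z : A, x * (y * z) = y * (x * z))
    (e f : A) (he : e * e = e) (hf : f * f = f) :
    (e * f) * (e * f) = e * f ∧ e * f = f * e := by
  have hef : IsIdempotentElem (e * f) :=
    IsIdempotentElem.mul_of_medial (medial_of_leftInvertive hAG) he hf
  exact ⟨hef, IsIdempotentElem.mul_comm_of_paramedial
    (paramedial_of_leftInvertive_of_leftPermutable hAG hStar) he hf hef⟩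
end

section
/- Let A be an AG-groupoid with left identity e in which every element has a unique inverse. Then for all a, b in A the equation xa = b has a unique solution x (namely x = b·a^{-1}). -/
section AGGroupoid

variable {A : Type*} [Mul A] (hAG : ∀ x y z : A, x * y * z = z * y * x)
  {e : A} (he : ∀ x : A, e * x = x)
include hAG he

theorem mul_mul_cancel_right_of_right_inverse {a i : A} (hai : a * i = e) (b : A) :
    b * i * a = b := by
  rw [hAG, hai, he]

theorem mul_mul_cancel_right_of_left_inverse {a i : A} (hia : i * a = e) (x : A) :
    x * a * i = x := by
  rw [hAG, hia, he]

end AGGroupoid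

/-- In an AG-groupoid with left identity `e` in which every element has a unique
inverse, the equation `x*a = b` has a unique solution for all `a, b`. -/
theorem unique_solution {A : Type*} [Mul A]
    (hAG : ∀ x y z : A, x * y * z = z * y * x)
    (e : A) (he : ∀ x : A, e * x = x)
    (hinv : ∀ a : A, ∃! i : A, i * a = e ∧ a * i = e)
    (a b : A) :
    ∃! x : A, x * a = b := by
  obtain ⟨i, ⟨hia, hai⟩, -⟩ := hinv a
  refine ⟨b * i, mul_mul_cancel_right_of_right_inverse hAG he hai b, fun x hx => ?_⟩
  rw [← hx, mul_mul_cancel_right_of_left_inverse hAG he hia]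
end

section
/- In a regular AG-groupoid, if a* is an inverse of a and b* is an inverse of b, then a*b* is an inverse of ab; that is, V(a)V(b) ⊆ V(ab). -/
/-! The left invertive law `(xy)z = (zy)x` implies the medial law `(xy)(zw) = (xz)(yw)`.
Applied to `((ab)(a*b*))(ab)` it regroups the product as `((aa*)a)((bb*)b) = ab`, and
symmetrically for `a*b*`. -/

namespace LeftInvertive

variable {A : Type*} [Mul A] (hAG : ∀ x y z : A, x * y * z = z * y * x)
include hAG

theorem mul_mul_mul_comm (x y z w : A) : x * y * (z * w) = x * z * (y * w) :=
  calc x * y * (z * w) = z * w * y * x := hAG _ _ _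
    _ = y * w * z * x := by rw [hAG z w y]
    _ = x * z * (y * w) := hAG _ _ _

theorem mul_mul_mul_self_of_mul_mul_self {a b x y : A} (ha : a * x * a = a)
    (hb : b * y * b = b) : a * b * (x * y) * (a * b) = a * b := by
  rw [mul_mul_mul_comm hAG a b x y, mul_mul_mul_comm hAG (a * x) (b * y) a b, ha, hb]

end LeftInvertive

theorem inverses_multiply_general {A : Type*} [Mul A]
    (hAG : ∀ x y z : A, x * y * z = z * y * x)
    (a b astar bstar : A)
    (ha : (a * astar) * a = a ∧ (astar * a) * astar = astar)
    (hb : (b * bstar) * b = b ∧ (bstar * b) * bstar = bstar) :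
    ((a * b) * (astar * bstar)) * (a * b) = a * b ∧
    ((astar * bstar) * (a * b)) * (astar * bstar) = astar * bstar :=
  ⟨LeftInvertive.mul_mul_mul_self_of_mul_mul_self hAG ha.1 hb.1,
    LeftInvertive.mul_mul_mul_self_of_mul_mul_self hAG ha.2 hb.2⟩

/-- In a regular AG-groupoid, if `a*` is an inverse of `a` and `b*` is an inverse of
`b`, then `a* * b*` is an inverse of `a*b`; that is, `V(a)V(b) ⊆ V(ab)`. -/
theorem inverses_multiply {A : Type*} [Mul A]
    (hAG : ∀ x y z : A, x * y * z = z * y * x)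
    (hreg : ∀ a : A, ∃ x : A, (a * x) * a = a ∧ (x * a) * x = x)
    (a b astar bstar : A)
    (ha : (a * astar) * a = a ∧ (astar * a) * astar = astar)
    (hb : (b * bstar) * b = b ∧ (bstar * b) * bstar = bstar) :
    ((a * b) * (astar * bstar)) * (a * b) = a * b ∧
    ((astar * bstar) * (a * b)) * (astar * bstar) = astar * bstar :=
  inverses_multiply_general hAG a b astar bstar ha hb
end

section
/- A completely inverse AG**-groupoid containing exactly one idempotent is an AG-group: the unique idempotent e = aa^{-1} is a left identity. -/
theorem isIdempotentElem_mul_inv {A : Type*} [Mul A] (inv : A → A)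
    (hStar : ∀ x y z : A, x * (y * z) = y * (x * z))
    (hinv2 : ∀ a : A, (inv a * a) * inv a = inv a)
    (hcomm : ∀ a : A, a * inv a = inv a * a) (a : A) :
    IsIdempotentElem (a * inv a) :=
  calc (a * inv a) * (a * inv a) = a * ((a * inv a) * inv a) := hStar _ _ _
    _ = a * ((inv a * a) * inv a) := by rw [hcomm]
    _ = a * inv a := by rw [hinv2]

theorem unique_idempotent_ag_group_general {A : Type*} [Mul A] (inv : A → A)
    (hStar : ∀ x y z : A, x * (y * z) = y * (x * z))
    (hinv1 : ∀ a : A, (a * inv a) * a = a)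
    (hinv2 : ∀ a : A, (inv a * a) * inv a = inv a)
    (hcomm : ∀ a : A, a * inv a = inv a * a)
    (e : A) (he : ∀ g : A, g * g = g → g = e) :
    (∀ a : A, a * inv a = e) ∧ (∀ a : A, e * a = a) := by
  have hmul_inv : ∀ a : A, a * inv a = e := fun a =>
    he _ (isIdempotentElem_mul_inv inv hStar hinv2 hcomm a)
  exact ⟨hmul_inv, fun a => hmul_inv a ▸ hinv1 a⟩

/-- A completely inverse AG**-groupoid containing exactly one idempotent is an
AG-group: the unique idempotent `e` equals `a * a⁻¹` for every `a` and is a left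
identity. -/
theorem unique_idempotent_ag_group {A : Type*} [Mul A] (inv : A → A)
(hAG : ∀ x y z : A, x * y * z = z * y * x)
    (hStar : ∀ x y z : A, x * (y * z) = y * (x * z))
    (hinv1 : ∀ a : A, (a * inv a) * a = a)
    (hinv2 : ∀ a : A, (inv a * a) * inv a = inv a)
    (hcomm : ∀ a : A, a * inv a = inv a * a)
    (huniq : ∀ a b : A, (a * b) * a = a → (b * a) * b = b → b = inv a)
    (e : A) (hee : e * e = e) (he : ∀ g : A, g * g = g → g = e) :
    (∀ a : A, a * inv a = e) ∧ (∀ a : A, e * a = a) :=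
  unique_idempotent_ag_group_general inv hStar hinv1 hinv2 hcomm e he
end

section
/- Completely inverse AG**-groupoids are idempotent-surjective: for every congruence ρ on a completely inverse AG**-groupoid A and every a in A with (a, a²) ∈ ρ, the ρ-class of a contains an idempotent of A. Concretely, e = a(xa) is an idempotent ρ-related to a, where x is the inverse of a². -/
/-!
Put `b = a²` and `x = b⁻¹`. Then `e = a(xa) = xb` and `eb = b`, so `ee = x(eb) = xb = e`.
Modulo `ρ` we have `a ≡ b`, hence `a ≡ b ≡ eb ≡ ea`, and the medial law rewrites `ea` as `b(xa)`,
which is `≡ a(xa) = e`.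
-/

section AGGroupoid

variable {A : Type*} [Mul A]

theorem mul_mul_mul_comm_of_left_invertive (hAG : ∀ x y z : A, x * y * z = z * y * x)
    (p q u v : A) : p * q * (u * v) = p * u * (q * v) := by
  rw [hAG p q (u * v), hAG u v q, hAG (q * v) u p]

theorem isIdempotentElem_mul_of_mul_mul_eq (hStar : ∀ x y z : A, x * (y * z) = y * (x * z))
    {x b : A} (h : x * b * b = b) : IsIdempotentElem (x * b) := by
  rw [IsIdempotentElem, hStar (x * b) x b, h]

theorem mul_mul_self_mul_eq_of_commute (hAG : ∀ x y z : A, x * y * z = z * y * x)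
    {x a : A} (h : Commute x (a * a)) : x * (a * a) * a = a * a * (x * a) := by
  rw [h.eq, hAG (a * a) x a, mul_mul_mul_comm_of_left_invertive hAG a x a a]

theorem Con.rel_mul_mul_self_of_rel_mul_self (c : Con A)
    (hAG : ∀ x y z : A, x * y * z = z * y * x) (hStar : ∀ x y z : A, x * (y * z) = y * (x * z))
    {a x : A} (ha : c a (a * a)) (hcomm : Commute x (a * a)) (hx : x * (a * a) * (a * a) = a * a) :
    c a (x * (a * a)) := by
  have hea : c (x * (a * a) * a) a := by
    refine c.trans (c.mul (c.refl (x * (a * a))) ha) ?_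
    rw [hx]
    exact c.symm ha
  have hae : c (a * a * (x * a)) (x * (a * a)) := by
    simpa only [hStar a x a] using c.mul (c.symm ha) (c.refl (x * a))
  rw [mul_mul_self_mul_eq_of_commute hAG hcomm] at hea
  exact c.trans (c.symm hea) hae

end AGGroupoid

theorem idempotent_surjective_general {A : Type*} [Mul A] (inv : A → A)
(hAG : ∀ x y z : A, x * y * z = z * y * x)
    (hStar : ∀ x y z : A, x * (y * z) = y * (x * z))
    (hinv1 : ∀ a : A, (a * inv a) * a = a)
    (hcomm : ∀ a : A, a * inv a = inv a * a)
    (r : A → A → Prop) (hequiv : Equivalence r)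
    (hcompat : ∀ a b c d : A, r a b → r c d → r (a * c) (b * d))
    (a : A) (ha : r a (a * a)) :
    (a * (inv (a * a) * a)) * (a * (inv (a * a) * a)) = a * (inv (a * a) * a) ∧
    r a (a * (inv (a * a) * a)) := by
  let ρ : Con A := ⟨⟨r, hequiv⟩, hcompat _ _ _ _⟩
  have hx : Commute (inv (a * a)) (a * a) := (hcomm (a * a)).symm
  have hxb : inv (a * a) * (a * a) * (a * a) = a * a := by rw [← hcomm]; exact hinv1 (a * a)
  rw [hStar a (inv (a * a)) a]
  exact ⟨(isIdempotentElem_mul_of_mul_mul_eq hStar hxb).eq,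
    ρ.rel_mul_mul_self_of_rel_mul_self hAG hStar ha hx hxb⟩

/-- Completely inverse AG**-groupoids are idempotent-surjective: if `ρ` is a
congruence and `(a, a²) ∈ ρ`, then `e = a*(x*a)` with `x = (a²)⁻¹` is an
idempotent `ρ`-related to `a`. -/
theorem idempotent_surjective {A : Type*} [Mul A] (inv : A → A)
(hAG : ∀ x y z : A, x * y * z = z * y * x)
    (hStar : ∀ x y z : A, x * (y * z) = y * (x * z))
    (hinv1 : ∀ a : A, (a * inv a) * a = a)
    (hinv2 : ∀ a : A, (inv a * a) * inv a = inv a)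
    (hcomm : ∀ a : A, a * inv a = inv a * a)
    (huniq : ∀ a b : A, (a * b) * a = a → (b * a) * b = b → b = inv a)
    (r : A → A → Prop) (hequiv : Equivalence r)
    (hcompat : ∀ a b c d : A, r a b → r c d → r (a * c) (b * d))
    (a : A) (ha : r a (a * a)) :
    (a * (inv (a * a) * a)) * (a * (inv (a * a) * a)) = a * (inv (a * a) * a) ∧
    r a (a * (inv (a * a) * a)) :=
  idempotent_surjective_general inv hAG hStar hinv1 hcomm r hequiv hcompat a ha
end

section
/- On a completely inverse AG**-groupoid A, the relation μ defined by (a,b) ∈ μ iff aa^{-1} = bb^{-1} is a congruence on A, and the quotient A/μ is a semilattice (commutative and idempotent). -/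
/-! By uniqueness of inverses and the medial law, inversion is multiplicative, so
`(a * b) * (a * b)⁻¹ = (a * a⁻¹) * (b * b⁻¹)`. Hence `a ↦ a * a⁻¹` is a homomorphism onto a set of
idempotents, and `μ` is its kernel. Idempotents commute by the paramedial law, so the image, and
with it `A / μ`, is a semilattice. -/

namespace AGGroupoid

variable {A : Type*} [Mul A]

theorem medial (hAG : ∀ x y z : A, x * y * z = z * y * x) (a b c d : A) :
    (a * b) * (c * d) = (a * c) * (b * d) :=
  calc (a * b) * (c * d) = ((c * d) * b) * a := hAG _ _ _
    _ = ((b * d) * c) * a := by rw [hAG c d b]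
    _ = (a * c) * (b * d) := hAG _ _ _

theorem paramedial (hAG : ∀ x y z : A, x * y * z = z * y * x)
    (hStar : ∀ x y z : A, x * (y * z) = y * (x * z)) (a b c d : A) :
    (a * b) * (c * d) = (d * b) * (c * a) :=
  calc (a * b) * (c * d) = c * ((a * b) * d) := hStar _ _ _
    _ = c * ((d * b) * a) := by rw [hAG a b d]
    _ = (d * b) * (c * a) := hStar _ _ _

theorem mul_comm_of_isIdempotentElem (hAG : ∀ x y z : A, x * y * z = z * y * x)
    (hStar : ∀ x y z : A, x * (y * z) = y * (x * z)) {e f : A} (he : IsIdempotentElem e)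
    (hf : IsIdempotentElem f) : e * f = f * e :=
  calc e * f = (e * e) * (f * f) := by rw [he.eq, hf.eq]
    _ = (f * e) * (f * e) := paramedial hAG hStar _ _ _ _
    _ = (f * f) * (e * e) := medial hAG _ _ _ _
    _ = f * e := by rw [he.eq, hf.eq]

variable (inv : A → A)

theorem isIdempotentElem_mul_inv (hAG : ∀ x y z : A, x * y * z = z * y * x)
    (hinv2 : ∀ a : A, (inv a * a) * inv a = inv a) (hcomm : ∀ a : A, a * inv a = inv a * a)
    (a : A) : IsIdempotentElem (a * inv a) := by
  rw [IsIdempotentElem, hAG, hcomm, hinv2]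

theorem inv_mul (hAG : ∀ x y z : A, x * y * z = z * y * x)
    (hinv1 : ∀ a : A, (a * inv a) * a = a) (hinv2 : ∀ a : A, (inv a * a) * inv a = inv a)
    (huniq : ∀ a b : A, (a * b) * a = a → (b * a) * b = b → b = inv a) (a b : A) :
    inv (a * b) = inv a * inv b := by
  refine (huniq _ _ ?_ ?_).symm
  · rw [medial hAG a b, medial hAG (a * inv a), hinv1, hinv1]
  · rw [medial hAG (inv a), medial hAG (inv a * a), hinv2, hinv2]

theorem mul_mul_inv_mul (hAG : ∀ x y z : A, x * y * z = z * y * x)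
    (hinv1 : ∀ a : A, (a * inv a) * a = a) (hinv2 : ∀ a : A, (inv a * a) * inv a = inv a)
    (huniq : ∀ a b : A, (a * b) * a = a → (b * a) * b = b → b = inv a) (a b : A) :
    (a * b) * inv (a * b) = (a * inv a) * (b * inv b) := by
  rw [inv_mul inv hAG hinv1 hinv2 huniq, medial hAG]

end AGGroupoid

open AGGroupoid

/-- On a completely inverse AG**-groupoid, the relation `μ` given by
`a*a⁻¹ = b*b⁻¹` is a congruence whose quotient is a semilattice. -/
theorem mu_semilattice_congruence {A : Type*} [Mul A] (inv : A → A)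
(hAG : ∀ x y z : A, x * y * z = z * y * x)
    (hStar : ∀ x y z : A, x * (y * z) = y * (x * z))
    (hinv1 : ∀ a : A, (a * inv a) * a = a)
    (hinv2 : ∀ a : A, (inv a * a) * inv a = inv a)
    (hcomm : ∀ a : A, a * inv a = inv a * a)
    (huniq : ∀ a b : A, (a * b) * a = a → (b * a) * b = b → b = inv a)
    :
    (∀ a b c d : A, a * inv a = b * inv b → c * inv c = d * inv d →
      (a * c) * inv (a * c) = (b * d) * inv (b * d)) ∧
    (∀ a b : A, (a * b) * inv (a * b) = (b * a) * inv (b * a)) ∧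
    (∀ a : A, (a * a) * inv (a * a) = a * inv a) := by
  have key := mul_mul_inv_mul inv hAG hinv1 hinv2 huniq
  have idem := isIdempotentElem_mul_inv inv hAG hinv2 hcomm
  refine ⟨fun a b c d hab hcd => ?_, fun a b => ?_, fun a => ?_⟩
  · rw [key, key, hab, hcd]
  · rw [key, key, mul_comm_of_isIdempotentElem hAG hStar (idem a) (idem b)]
  · rw [key, (idem a).eq]
end

section
/- If ρ₁ and ρ₂ are idempotent-separating congruences on a completely inverse AG**-groupoid A, then ρ₁ and ρ₂ commute as relations: ρ₁∘ρ₂ = ρ₂∘ρ₁. -/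
/-!
An idempotent-separating congruence `ρ` identifies the idempotents `a a⁻¹` and `c c⁻¹` whenever
`a ρ c`: both are congruent to their product, which is again idempotent since idempotents
commute. Hence if `a ρ₁ c ρ₂ b`, the three elements share the idempotent `e = a a⁻¹ = c c⁻¹ = b b⁻¹`,
and `d = (a c⁻¹) b` satisfies `a = (a c⁻¹) c ρ₂ d` and `d ρ₁ (c c⁻¹) b = e b = b`.
-/

structure IsAGStarStar (A : Type*) [Mul A] : Prop where
  left_invertive : ∀ x y z : A, x * y * z = z * y * x
  left_comm : ∀ x y z : A, x * (y * z) = y * (x * z)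

section

variable {A : Type*} [Mul A] {inv : A → A}

structure IsCommutingInverse (inv : A → A) : Prop where
  mul_inv_mul : ∀ a : A, a * inv a * a = a
  inv_mul_inv : ∀ a : A, inv a * a * inv a = inv a
  mul_inv_comm : ∀ a : A, a * inv a = inv a * a

def Con.IsIdempotentSeparating (ρ : Con A) : Prop :=
  ∀ ⦃e f : A⦄, IsIdempotentElem e → IsIdempotentElem f → ρ e f → e = f

theorem IsAGStarStar.commute_of_isIdempotentElem (hA : IsAGStarStar A) {e f : A}
    (he : IsIdempotentElem e) (hf : IsIdempotentElem f) : Commute e f := by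
  have hef : e * f = f * e * e := by rw [hA.left_invertive f e e, he.eq]
  have hfe : f * e = e * f * f := by rw [hA.left_invertive e f f, hf.eq]
  calc e * f = e * f * f * e := by rw [← hfe, ← hef]
    _ = e * f * (e * f) := hA.left_invertive _ _ _
    _ = e * (f * f * e) := by rw [hA.left_comm, hA.left_invertive e f f]
    _ = f * e := by rw [hf.eq, hA.left_comm, he.eq]

theorem IsCommutingInverse.isIdempotentElem_mul_inv (hA : IsAGStarStar A)
    (hinv : IsCommutingInverse inv) (a : A) : IsIdempotentElem (a * inv a) := by
  have h : a * inv a * inv a = inv a := by rw [hinv.mul_inv_comm]; exact hinv.inv_mul_inv a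
  rw [IsIdempotentElem, hA.left_comm, h]

theorem Con.rel_mul_inv_mul_inv (hA : IsAGStarStar A) (hinv : IsCommutingInverse inv)
    (ρ : Con A) {a b : A} (h : ρ a b) : ρ (a * inv a) (b * inv b * (a * inv a)) := by
  have ha : ρ a (b * inv b * a) := by
    have hb := ρ.mul (ρ.refl (b * inv b)) h
    rw [hinv.mul_inv_mul] at hb
    exact ρ.trans h (ρ.symm hb)
  have h' := ρ.mul (ρ.refl (inv a)) ha
  rwa [hA.left_comm, ← hinv.mul_inv_comm] at h'

theorem Con.IsIdempotentSeparating.mul_inv_eq (hA : IsAGStarStar A)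
    (hinv : IsCommutingInverse inv) {ρ : Con A} (hρ : ρ.IsIdempotentSeparating)
    {a b : A} (h : ρ a b) : a * inv a = b * inv b := by
  have he := hinv.isIdempotentElem_mul_inv hA a
  have hf := hinv.isIdempotentElem_mul_inv hA b
  have hef := ρ.rel_mul_inv_mul_inv hA hinv h
  have hfe := ρ.rel_mul_inv_mul_inv hA hinv (ρ.symm h)
  rw [(hA.commute_of_isIdempotentElem hf he).eq] at hef
  exact hρ he hf (ρ.trans hef (ρ.symm hfe))

theorem Con.comp_le_comp_of_isIdempotentSeparating (hA : IsAGStarStar A)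
    (hinv : IsCommutingInverse inv) {ρ₁ ρ₂ : Con A} (hρ₁ : ρ₁.IsIdempotentSeparating)
    (hρ₂ : ρ₂.IsIdempotentSeparating) : Relation.Comp ρ₁ ρ₂ ≤ Relation.Comp ρ₂ ρ₁ := by
  rintro a b ⟨c, hac, hcb⟩
  have hac' := hρ₁.mul_inv_eq hA hinv hac
  have hcb' := hρ₂.mul_inv_eq hA hinv hcb
  refine ⟨a * inv c * b, ?_, ?_⟩
  · have h := ρ₂.mul (ρ₂.refl (a * inv c)) hcb
    rwa [hA.left_invertive a, ← hac', hinv.mul_inv_mul] at h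
  · have h := ρ₁.mul (ρ₁.mul hac (ρ₁.refl (inv c))) (ρ₁.refl b)
    rwa [hcb', hinv.mul_inv_mul] at h

end

theorem idempotent_separating_commute_general {A : Type*} [Mul A] (inv : A → A)
(hAG : ∀ x y z : A, x * y * z = z * y * x)
    (hStar : ∀ x y z : A, x * (y * z) = y * (x * z))
    (hinv1 : ∀ a : A, (a * inv a) * a = a)
    (hinv2 : ∀ a : A, (inv a * a) * inv a = inv a)
    (hcomm : ∀ a : A, a * inv a = inv a * a)
    (r₁ r₂ : A → A → Prop) (hequiv₁ : Equivalence r₁) (hequiv₂ : Equivalence r₂)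
    (hcompat₁ : ∀ a b c d : A, r₁ a b → r₁ c d → r₁ (a * c) (b * d))
    (hcompat₂ : ∀ a b c d : A, r₂ a b → r₂ c d → r₂ (a * c) (b * d))
    (hsep₁ : ∀ e f : A, e * e = e → f * f = f → r₁ e f → e = f)
    (hsep₂ : ∀ e f : A, e * e = e → f * f = f → r₂ e f → e = f)
    (a b : A) :
    (∃ c : A, r₁ a c ∧ r₂ c b) ↔ (∃ c : A, r₂ a c ∧ r₁ c b) := by
  have hA : IsAGStarStar A := ⟨hAG, hStar⟩
  have hinv : IsCommutingInverse inv := ⟨hinv1, hinv2, hcomm⟩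
  let ρ₁ : Con A := ⟨⟨r₁, hequiv₁⟩, hcompat₁ _ _ _ _⟩
  let ρ₂ : Con A := ⟨⟨r₂, hequiv₂⟩, hcompat₂ _ _ _ _⟩
  have hρ₁ : ρ₁.IsIdempotentSeparating := hsep₁
  have hρ₂ : ρ₂.IsIdempotentSeparating := hsep₂
  exact ⟨Con.comp_le_comp_of_isIdempotentSeparating hA hinv hρ₁ hρ₂ a b,
    Con.comp_le_comp_of_isIdempotentSeparating hA hinv hρ₂ hρ₁ a b⟩

/-- Idempotent-separating congruences on a completely inverse AG**-groupoid
commute as relations: `ρ₁∘ρ₂ = ρ₂∘ρ₁`. -/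
theorem idempotent_separating_commute {A : Type*} [Mul A] (inv : A → A)
(hAG : ∀ x y z : A, x * y * z = z * y * x)
    (hStar : ∀ x y z : A, x * (y * z) = y * (x * z))
    (hinv1 : ∀ a : A, (a * inv a) * a = a)
    (hinv2 : ∀ a : A, (inv a * a) * inv a = inv a)
    (hcomm : ∀ a : A, a * inv a = inv a * a)
    (huniq : ∀ a b : A, (a * b) * a = a → (b * a) * b = b → b = inv a)
    (r₁ r₂ : A → A → Prop) (hequiv₁ : Equivalence r₁) (hequiv₂ : Equivalence r₂)
    (hcompat₁ : ∀ a b c d : A, r₁ a b → r₁ c d → r₁ (a * c) (b * d))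
    (hcompat₂ : ∀ a b c d : A, r₂ a b → r₂ c d → r₂ (a * c) (b * d))
    (hsep₁ : ∀ e f : A, e * e = e → f * f = f → r₁ e f → e = f)
    (hsep₂ : ∀ e f : A, e * e = e → f * f = f → r₂ e f → e = f)
    (a b : A) :
    (∃ c : A, r₁ a c ∧ r₂ c b) ↔ (∃ c : A, r₂ a c ∧ r₁ c b) :=
  idempotent_separating_commute_general inv hAG hStar hinv1 hinv2 hcomm r₁ r₂ hequiv₁ hequiv₂
    hcompat₁ hcompat₂ hsep₁ hsep₂ a b
end

section
/- In a completely inverse AG**-groupoid A, the natural partial order defined by a ≤ b iff a = eb for some idempotent e is a partial order on A that is compatible with multiplication (a ≤ b and c ≤ d imply ac ≤ bd) and with inverses (a ≤ b implies a^{-1} ≤ b^{-1}). -/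
/-!
Everything reduces to the medial law `(ab)(cd) = (ac)(bd)`, which holds in every AG-groupoid.
It makes products of idempotents idempotent (giving transitivity and compatibility with
multiplication) and lets an idempotent factor `e` be pulled through products. For the
inverse, `e b⁻¹` satisfies both defining equations of an inverse of `e b`, so by uniqueness
`(e b)⁻¹ = e b⁻¹`.
-/

/-- The left invertive law of an AG-groupoid. -/
def LeftInvertive (A : Type*) [Mul A] : Prop := ∀ x y z : A, x * y * z = z * y * x

/-- The additional law of an AG**-groupoid. -/
def LeftPermutable (A : Type*) [Mul A] : Prop := ∀ x y z : A, x * (y * z) = y * (x * z)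

def NaturalLE {A : Type*} [Mul A] (a b : A) : Prop := ∃ e : A, IsIdempotentElem e ∧ a = e * b

namespace LeftInvertive

variable {A : Type*} [Mul A]

theorem mul_mul_mul_comm_s16 (hAG : LeftInvertive A) (a b c d : A) :
    a * b * (c * d) = a * c * (b * d) :=
  calc a * b * (c * d) = c * d * b * a := hAG _ _ _
    _ = b * d * c * a := by rw [hAG c d b]
    _ = a * c * (b * d) := hAG _ _ _

theorem isIdempotentElem_mul (hAG : LeftInvertive A) {e f : A} (he : IsIdempotentElem e)
    (hf : IsIdempotentElem f) : IsIdempotentElem (e * f) := by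
  rw [IsIdempotentElem, hAG.mul_mul_mul_comm_s16, he.eq, hf.eq]

theorem isIdempotentElem_mul_of_inverse (hAG : LeftInvertive A) {a a' : A}
    (hcomm : a * a' = a' * a) (hinv : a' * a * a' = a') : IsIdempotentElem (a * a') :=
  calc a * a' * (a * a') = a * a' * (a' * a) := by rw [hcomm]
    _ = a' * a * a' * a := hAG _ _ _
    _ = a * a' := by rw [hinv, hcomm]

theorem mul_mul_mul_of_isIdempotentElem (hAG : LeftInvertive A) {e : A}
    (he : IsIdempotentElem e) (x y : A) : e * x * (e * y) * (e * x) = e * (x * y * x) := by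
  rw [hAG.mul_mul_mul_comm_s16 e x e y, he.eq, hAG.mul_mul_mul_comm_s16, he.eq]

theorem mul_mul_of_isIdempotentElem (hAG : LeftInvertive A) (hStar : LeftPermutable A)
    {f : A} (hf : IsIdempotentElem f) (e c : A) : e * (f * c) = f * e * c :=
  calc e * (f * c) = e * (c * f * f) := by rw [← hAG f f c, hf.eq]
    _ = c * f * (e * f) := hStar _ _ _
    _ = c * e * f := by rw [hAG.mul_mul_mul_comm_s16, hf.eq]
    _ = f * e * c := hAG _ _ _

theorem mul_mul_self_of_isIdempotentElem (hAG : LeftInvertive A) (hStar : LeftPermutable A)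
    {e : A} (he : IsIdempotentElem e) (b : A) : e * (e * b) = e * b := by
  rw [hAG.mul_mul_of_isIdempotentElem hStar he, he.eq]

end LeftInvertive

namespace NaturalLE

variable {A : Type*} [Mul A]

theorem refl (hAG : LeftInvertive A) (inv : A → A) (hinv1 : ∀ a : A, a * inv a * a = a)
    (hinv2 : ∀ a : A, inv a * a * inv a = inv a) (hcomm : ∀ a : A, a * inv a = inv a * a)
    (a : A) : NaturalLE a a :=
  ⟨a * inv a, hAG.isIdempotentElem_mul_of_inverse (hcomm a) (hinv2 a), (hinv1 a).symm⟩

theorem antisymm (hAG : LeftInvertive A) (hStar : LeftPermutable A) {a b : A}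
    (hab : NaturalLE a b) (hba : NaturalLE b a) : a = b := by
  obtain ⟨e, he, rfl⟩ := hab
  obtain ⟨f, -, hf⟩ := hba
  calc e * b = e * (f * (e * b)) := by rw [← hf]
    _ = f * (e * (e * b)) := hStar _ _ _
    _ = b := by rw [hAG.mul_mul_self_of_isIdempotentElem hStar he, ← hf]

theorem trans (hAG : LeftInvertive A) (hStar : LeftPermutable A) {a b c : A}
    (hab : NaturalLE a b) (hbc : NaturalLE b c) : NaturalLE a c := by
  obtain ⟨e, he, rfl⟩ := hab
  obtain ⟨f, hf, rfl⟩ := hbc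
  exact ⟨f * e, hAG.isIdempotentElem_mul hf he, hAG.mul_mul_of_isIdempotentElem hStar hf e c⟩

theorem mul (hAG : LeftInvertive A) {a b c d : A} (hab : NaturalLE a b)
    (hcd : NaturalLE c d) : NaturalLE (a * c) (b * d) := by
  obtain ⟨e, he, rfl⟩ := hab
  obtain ⟨f, hf, rfl⟩ := hcd
  exact ⟨e * f, hAG.isIdempotentElem_mul he hf, hAG.mul_mul_mul_comm_s16 e b f d⟩

theorem inv (hAG : LeftInvertive A) (inv : A → A) (hinv1 : ∀ a : A, a * inv a * a = a)
    (hinv2 : ∀ a : A, inv a * a * inv a = inv a)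
    (huniq : ∀ a b : A, a * b * a = a → b * a * b = b → b = inv a) {a b : A}
    (hab : NaturalLE a b) : NaturalLE (inv a) (inv b) := by
  obtain ⟨e, he, rfl⟩ := hab
  refine ⟨e, he, (huniq _ _ ?_ ?_).symm⟩
  · rw [hAG.mul_mul_mul_of_isIdempotentElem he, hinv1]
  · rw [hAG.mul_mul_mul_of_isIdempotentElem he, hinv2]

end NaturalLE

/-- In a completely inverse AG**-groupoid, the natural partial order
`a ≤ b ↔ ∃ idempotent e, a = e*b` is a partial order compatible with
multiplication and inverses. -/
theorem natural_partial_order {A : Type*} [Mul A] (inv : A → A)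
(hAG : ∀ x y z : A, x * y * z = z * y * x)
    (hStar : ∀ x y z : A, x * (y * z) = y * (x * z))
    (hinv1 : ∀ a : A, (a * inv a) * a = a)
    (hinv2 : ∀ a : A, (inv a * a) * inv a = inv a)
    (hcomm : ∀ a : A, a * inv a = inv a * a)
    (huniq : ∀ a b : A, (a * b) * a = a → (b * a) * b = b → b = inv a)
    :
    (∀ a : A, ∃ e : A, e * e = e ∧ a = e * a) ∧
    (∀ a b : A, (∃ e : A, e * e = e ∧ a = e * b) →
      (∃ f : A, f * f = f ∧ b = f * a) → a = b) ∧
    (∀ a b c : A, (∃ e : A, e * e = e ∧ a = e * b) →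
      (∃ f : A, f * f = f ∧ b = f * c) → ∃ g : A, g * g = g ∧ a = g * c) ∧
    (∀ a b c d : A, (∃ e : A, e * e = e ∧ a = e * b) →
      (∃ f : A, f * f = f ∧ c = f * d) →
      ∃ g : A, g * g = g ∧ a * c = g * (b * d)) ∧
    (∀ a b : A, (∃ e : A, e * e = e ∧ a = e * b) →
      ∃ g : A, g * g = g ∧ inv a = g * inv b) :=
  ⟨NaturalLE.refl hAG inv hinv1 hinv2 hcomm,
    fun _ _ => NaturalLE.antisymm hAG hStar,
    fun _ _ _ => NaturalLE.trans hAG hStar,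
    fun _ _ _ _ => NaturalLE.mul hAG,
    fun _ _ => NaturalLE.inv hAG inv hinv1 hinv2 huniq⟩
end

section
/- In a completely inverse AG**-groupoid, if ab is idempotent then ab = ba. -/
theorem mul_comm_of_isIdempotentElem_of_mul_eq_right {A : Type*} [Mul A]
    (hAG : ∀ x y z : A, x * y * z = z * y * x)
    (hStar : ∀ x y z : A, x * (y * z) = y * (x * z))
    {a b e : A} (he : e * b = b) (h : IsIdempotentElem (a * b)) :
    a * b = b * a :=
  calc a * b = (a * (e * b)) * (a * b) := by rw [he, h.eq]
    _ = (e * (a * b)) * (a * b) := by rw [hStar a e b]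
    _ = ((a * b) * (a * b)) * e := hAG _ _ _
    _ = (a * b) * e := by rw [h.eq]
    _ = (e * b) * a := hAG _ _ _
    _ = b * a := by rw [he]

theorem idempotent_product_comm_general {A : Type*} [Mul A] (inv : A → A)
(hAG : ∀ x y z : A, x * y * z = z * y * x)
    (hStar : ∀ x y z : A, x * (y * z) = y * (x * z))
    (hinv1 : ∀ a : A, (a * inv a) * a = a)
    (a b : A) (h : (a * b) * (a * b) = a * b) :
    a * b = b * a :=
  mul_comm_of_isIdempotentElem_of_mul_eq_right hAG hStar (hinv1 b) h

/-- In a completely inverse AG**-groupoid, if `a*b` is idempotent then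
`a*b = b*a`. -/
theorem idempotent_product_comm {A : Type*} [Mul A] (inv : A → A)
(hAG : ∀ x y z : A, x * y * z = z * y * x)
    (hStar : ∀ x y z : A, x * (y * z) = y * (x * z))
    (hinv1 : ∀ a : A, (a * inv a) * a = a)
    (hinv2 : ∀ a : A, (inv a * a) * inv a = inv a)
    (hcomm : ∀ a : A, a * inv a = inv a * a)
    (huniq : ∀ a b : A, (a * b) * a = a → (b * a) * b = b → b = inv a)
    (a b : A) (h : (a * b) * (a * b) = a * b) :
    a * b = b * a :=
  idempotent_product_comm_general inv hAG hStar hinv1 a b h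
end

section
/- On a completely inverse AG**-groupoid A, the relation σ = {(a,b) : there exists an idempotent e with ea = eb} is the least congruence ρ on A such that the quotient A/ρ is an AG-group; moreover its kernel equals the closure E_Aω = {a ∈ A : ea is idempotent for some idempotent e}. -/
/-! Idempotents of an AG**-groupoid form a commutative subsemigroup acting on `A` by
`(e * f) * x = f * (e * x)`, so `σ` is transitive and compatible with the witness `e * f`.
All idempotents are `σ`-related, and each class `e * b` collapses onto `b`, which makes
`A/σ` an AG-group with the idempotent class as identity and `inv a` as inverse of `a`.
Conversely, if `A/r` is an AG-group, every idempotent of `A` maps to an idempotent of it,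
hence to its identity `u`; so `e * a = e * b` gives `a ≈ u * a ≈ e * a = e * b ≈ b`. -/

class IsAGGroupoid (A : Type*) [Mul A] : Prop where
  left_invertive : ∀ x y z : A, x * y * z = z * y * x

class IsAGStarGroupoid (A : Type*) [Mul A] : Prop extends IsAGGroupoid A where
  left_permutable : ∀ x y z : A, x * (y * z) = y * (x * z)

namespace AGGroupoid

open IsAGGroupoid IsAGStarGroupoid

variable {A : Type*} [Mul A]

section AG

variable [IsAGGroupoid A]

theorem mul_mul_mul_comm (a b c d : A) : (a * b) * (c * d) = (a * c) * (b * d) := by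
  rw [left_invertive, left_invertive c d b, left_invertive]

theorem isIdempotentElem_mul {e f : A} (he : IsIdempotentElem e) (hf : IsIdempotentElem f) :
    IsIdempotentElem (e * f) := by
  rw [IsIdempotentElem, mul_mul_mul_comm, he.eq, hf.eq]

theorem rel_of_isIdempotentElem (r : Con A) {u : A} (hu : ∀ b, r (u * b) b)
    (hinv : ∀ a, ∃ x, r (x * a) u) {e : A} (he : IsIdempotentElem e) : r e u := by
  obtain ⟨x, hx⟩ := hinv e
  have hxe : r ((x * e) * e) e := r.trans (r.mul hx (r.refl e)) (hu e)
  have hxu : r ((x * e) * u) u := r.trans (r.mul hx (r.refl u)) (hu u)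
  have hee : r ((x * e) * e) ((x * e) * u) := by
    have : r ((e * e) * x) ((u * e) * x) := by
      rw [he.eq]
      exact r.mul (r.symm (hu e)) (r.refl x)
    rwa [left_invertive e, left_invertive u] at this
  exact r.trans (r.symm hxe) (r.trans hee hxu)

end AG

section AGStar

variable [IsAGStarGroupoid A]

theorem idem_mul_idem_mul {e : A} (he : IsIdempotentElem e) (x : A) : e * (e * x) = e * x := by
  have h : e * x = (x * e) * e := by rw [left_invertive, he.eq]
  rw [h, left_permutable e (x * e) e, he.eq]

theorem idem_mul_mul {e : A} (he : IsIdempotentElem e) (f x : A) : (e * f) * x = f * (e * x) := by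
  calc (e * f) * x = ((f * e) * e) * x := by rw [left_invertive f e e, he.eq]
    _ = (x * e) * (f * e) := left_invertive _ _ _
    _ = f * ((x * e) * e) := left_permutable _ _ _
    _ = f * (e * x) := by rw [left_invertive x e e, he.eq]

theorem idem_mul_comm {e f : A} (he : IsIdempotentElem e) (hf : IsIdempotentElem f) :
    e * f = f * e := by
  calc e * f = (f * e) * e := by rw [left_invertive f e e, he.eq]
    _ = e * (f * e) := idem_mul_mul hf e e
    _ = f * e := by rw [left_permutable, he.eq]

theorem isIdempotentElem_mul_inv_s19 {a a' : A} (hinv : (a' * a) * a' = a')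
    (hcomm : a * a' = a' * a) : IsIdempotentElem (a * a') := by
  rw [IsIdempotentElem, left_permutable, hcomm, hinv, hcomm]

def sigma (hE : ∃ e : A, IsIdempotentElem e) : Con A where
  r a b := ∃ e, IsIdempotentElem e ∧ e * a = e * b
  iseqv := by
    refine ⟨fun a => hE.imp fun e he => ⟨he, rfl⟩, fun ⟨e, he, h⟩ => ⟨e, he, h.symm⟩, ?_⟩
    rintro a b c ⟨e, he, hab⟩ ⟨f, hf, hbc⟩
    refine ⟨e * f, isIdempotentElem_mul he hf, ?_⟩
    calc (e * f) * a = f * (e * b) := by rw [idem_mul_mul he, hab]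
      _ = e * (f * c) := by rw [left_permutable, hbc]
      _ = (e * f) * c := by rw [left_permutable, idem_mul_mul he]
  mul' := by
    rintro a b c d ⟨e, he, hab⟩ ⟨f, hf, hcd⟩
    refine ⟨e * f, isIdempotentElem_mul he hf, ?_⟩
    rw [mul_mul_mul_comm, hab, hcd, ← mul_mul_mul_comm]

variable (hE : ∃ e : A, IsIdempotentElem e)

theorem sigma_idem_mul {e : A} (he : IsIdempotentElem e) (b : A) : sigma hE (e * b) b :=
  ⟨e, he, idem_mul_idem_mul he b⟩

theorem sigma_of_isIdempotentElem {e f : A} (he : IsIdempotentElem e) (hf : IsIdempotentElem f) :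
    sigma hE e f := by
  refine ⟨e * f, isIdempotentElem_mul he hf, ?_⟩
  calc (e * f) * e = f * e := by rw [idem_mul_mul he, he.eq]
    _ = e * f := idem_mul_comm hf he
    _ = (e * f) * f := by rw [idem_mul_mul he, left_permutable, hf.eq]

theorem sigma_le (r : Con A) {u : A} (hu : ∀ b, r (u * b) b) (hinv : ∀ a, ∃ x, r (x * a) u) :
    sigma hE ≤ r := by
  rintro a b ⟨e, he, hab⟩
  have heu := rel_of_isIdempotentElem r hu hinv he
  have hua : r (u * a) (e * b) := hab ▸ r.mul (r.symm heu) (r.refl a)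
  exact r.trans (r.symm (hu a)) (r.trans hua (r.trans (r.mul heu (r.refl b)) (hu b)))

theorem exists_sigma_idem_iff (a : A) :
    (∃ e, IsIdempotentElem e ∧ sigma hE a e) ↔
      ∃ e, IsIdempotentElem e ∧ IsIdempotentElem (e * a) := by
  constructor
  · rintro ⟨e, he, f, hf, hfa⟩
    exact ⟨f, hf, hfa ▸ isIdempotentElem_mul hf he⟩
  · rintro ⟨e, he, hea⟩
    exact ⟨e * a, hea, e, he, (idem_mul_idem_mul he a).symm⟩

end AGStar

end AGGroupoid

open AGGroupoid in
theorem sigma_least_ag_group_congruence_general {A : Type*} [Mul A] [Inhabited A] (inv : A → A)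
(hAG : ∀ x y z : A, x * y * z = z * y * x)
    (hStar : ∀ x y z : A, x * (y * z) = y * (x * z))
    (hinv2 : ∀ a : A, (inv a * a) * inv a = inv a)
    (hcomm : ∀ a : A, a * inv a = inv a * a)
    :
    letI σ : A → A → Prop := fun a b => ∃ e : A, e * e = e ∧ e * a = e * b
    -- σ is a congruence
    (Equivalence σ) ∧
    (∀ a b c d : A, σ a b → σ c d → σ (a * c) (b * d)) ∧
    -- the quotient A/σ is an AG-group: some idempotent class is a left identity
    -- and every class has a left inverse class
    (∃ e : A, e * e = e ∧ (∀ b : A, σ (e * b) b) ∧ (∀ a : A, σ (inv a * a) e)) ∧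
    -- σ is least among congruences whose quotient is an AG-group
    (∀ r : A → A → Prop, Equivalence r →
      (∀ a b c d : A, r a b → r c d → r (a * c) (b * d)) →
      (∃ u : A, (∀ b : A, r (u * b) b) ∧ (∀ a : A, ∃ x : A, r (x * a) u)) →
      ∀ a b : A, σ a b → r a b) ∧
    -- kernel of σ equals the closure of the set of idempotents
    (∀ a : A, (∃ e : A, e * e = e ∧ σ a e) ↔
      (∃ e : A, e * e = e ∧ (e * a) * (e * a) = e * a)) := by
  have : IsAGStarGroupoid A := { left_invertive := hAG, left_permutable := hStar }
  have hidem (a : A) : IsIdempotentElem (a * inv a) := isIdempotentElem_mul_inv_s19 (hinv2 a) (hcomm a)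
  have hE : ∃ e : A, IsIdempotentElem e := ⟨_, hidem default⟩
  refine ⟨(sigma hE).iseqv, fun _ _ _ _ => (sigma hE).mul,
    ⟨_, hidem default, sigma_idem_mul hE (hidem default), fun a => ?_⟩,
    fun r hr hm ⟨u, hu, hinv⟩ _ _ hab => sigma_le hE ⟨⟨r, hr⟩, hm _ _ _ _⟩ hu hinv hab,
    exists_sigma_idem_iff hE⟩
  exact sigma_of_isIdempotentElem hE (hcomm a ▸ hidem a) (hidem default)

/-- On a completely inverse AG**-groupoid, `σ = {(a,b) : ∃ idempotent e, e*a = e*b}`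
is the least congruence whose quotient is an AG-group, and its kernel is the
closure `E_Aω = {a : ∃ idempotent e, e*a idempotent}`. -/
theorem sigma_least_ag_group_congruence {A : Type*} [Mul A] [Inhabited A] (inv : A → A)
(hAG : ∀ x y z : A, x * y * z = z * y * x)
    (hStar : ∀ x y z : A, x * (y * z) = y * (x * z))
    (hinv1 : ∀ a : A, (a * inv a) * a = a)
    (hinv2 : ∀ a : A, (inv a * a) * inv a = inv a)
    (hcomm : ∀ a : A, a * inv a = inv a * a)
    (huniq : ∀ a b : A, (a * b) * a = a → (b * a) * b = b → b = inv a)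
    :
    letI σ : A → A → Prop := fun a b => ∃ e : A, e * e = e ∧ e * a = e * b
    -- σ is a congruence
    (Equivalence σ) ∧
    (∀ a b c d : A, σ a b → σ c d → σ (a * c) (b * d)) ∧
    -- the quotient A/σ is an AG-group: some idempotent class is a left identity
    -- and every class has a left inverse class
    (∃ e : A, e * e = e ∧ (∀ b : A, σ (e * b) b) ∧ (∀ a : A, σ (inv a * a) e)) ∧
    -- σ is least among congruences whose quotient is an AG-group
    (∀ r : A → A → Prop, Equivalence r →
      (∀ a b c d : A, r a b → r c d → r (a * c) (b * d)) →
      (∃ u : A, (∀ b : A, r (u * b) b) ∧ (∀ a : A, ∃ x : A, r (x * a) u)) →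
      ∀ a b : A, σ a b → r a b) ∧
    -- kernel of σ equals the closure of the set of idempotents
    (∀ a : A, (∃ e : A, e * e = e ∧ σ a e) ↔
      (∃ e : A, e * e = e ∧ (e * a) * (e * a) = e * a)) :=
  sigma_least_ag_group_congruence_general inv hAG hStar hinv2 hcomm
end
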